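/- arXiv:1205.2520 — 3 statements merged into one kernel-verified Lean document; each statement's English description precedes it below -/
import Mathlib

section
/- For α = μ/ν a reduced fraction with μ odd, the limit as n → ∞ of ξ_A(α, n) equals 1/ν; i.e., for all sufficiently large n, min_{p∈{0,...,n−2}, q∈ℤ} |(2p+1)μ/ν − 2q| = 1/ν. -/
/-- The anyonic exclusion constant
`ξ_A(α, n) = min_{p ∈ {0,…,n−2}} min_{q ∈ ℤ} |(2p+1)α − 2q|`. -/
noncomputable def xiA (α : ℝ) (n : ℕ) : ℝ :=
  sInf {x : ℝ | ∃ p : ℕ, ∃ q : ℤ, p ≤ n - 2 ∧ x = |(2 * (p : ℝ) + 1) * α - 2 * (q : ℝ)|}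

/-- If `α = μ/ν` is a reduced fraction with `μ` odd, then `ξ_A(α, n) → 1/ν` as `n → ∞`;
in fact `ξ_A(α, n) = 1/ν` for all sufficiently large `n`. -/
theorem stmt_4 (μ : ℤ) (ν : ℕ) (hμ : Odd μ) (hν : 0 < ν)
    (hcop : Nat.gcd μ.natAbs ν = 1) :
    Filter.Tendsto (fun n : ℕ => xiA ((μ : ℝ) / ν) n) Filter.atTop (nhds (1 / ν)) ∧
    ∃ n₀ : ℕ, ∀ n : ℕ, n₀ ≤ n → xiA ((μ : ℝ) / ν) n = 1 / ν := by
  have hν0 : (0:ℝ) < (ν : ℝ) := by exact_mod_cast hν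
  -- find p0 ≤ ν - 1 and q0 with (2 p0 + 1) μ = 1 + 2 ν q0
  obtain ⟨p0, q0, hp0, hkey⟩ : ∃ p0 : ℕ, ∃ q0 : ℤ, p0 ≤ ν - 1 ∧
      (2 * (p0:ℤ) + 1) * μ = 1 + 2 * ν * q0 := by
    have hcop2 : IsCoprime μ (2 * (ν:ℤ)) := by
      rw [Int.isCoprime_iff_gcd_eq_one]
      have h : Int.gcd μ (2*(ν:ℤ)) = Nat.gcd μ.natAbs (2*ν) := by
        rw [Int.gcd, Int.natAbs_mul]
        norm_num
      rw [h]
      have h2 : Nat.Coprime μ.natAbs 2 := by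
        have ho : Odd μ.natAbs := Int.natAbs_odd.mpr hμ
        rcases ho with ⟨k, hk⟩
        have hm : μ.natAbs % 2 = 1 := by omega
        rw [Nat.Coprime, Nat.gcd_comm, Nat.gcd_rec, hm]
        simp
      exact Nat.Coprime.mul_right h2 hcop
    obtain ⟨a, b, hab⟩ := hcop2
    have h2ν : (0:ℤ) < 2*(ν:ℤ) := by positivity
    set a' := a % (2*(ν:ℤ)) with ha'
    have hdef : a' = a - 2*(ν:ℤ) * (a / (2*(ν:ℤ))) := Int.emod_def a (2*(ν:ℤ))
    have ha'0 : 0 ≤ a' := Int.emod_nonneg a (by omega)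
    have ha'lt : a' < 2*(ν:ℤ) := Int.emod_lt_of_pos a h2ν
    have haodd : Odd a := by
      have h1 : Odd (a * μ) := by
        have : a * μ = 1 - (ν:ℤ) * b * 2 := by linarith
        rw [this]
        exact ⟨-((ν:ℤ)*b), by ring⟩
      exact (Int.odd_mul.mp h1).1
    have hodd : Odd a' := by
      rcases haodd with ⟨c, hc⟩
      exact ⟨c - (ν:ℤ) * (a / (2*(ν:ℤ))), by rw [hdef, hc]; ring⟩
    rcases hodd with ⟨c, hc⟩
    rw [hc] at ha'0 ha'lt
    refine ⟨c.toNat, -b - (a / (2*(ν:ℤ))) * μ, by omega, ?_⟩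
    have hc0 : 0 ≤ c := by omega
    have hct : (c.toNat : ℤ) = c := Int.toNat_of_nonneg hc0
    rw [hct, ← hc, hdef]
    linear_combination hab
  -- the key lemma: for n ≥ ν + 1, xiA (μ/ν) n = 1/ν
  have hev : ∀ n : ℕ, ν + 1 ≤ n → xiA ((μ : ℝ) / ν) n = 1 / ν := by
    intro n hn
    have hmem : (1 / (ν:ℝ)) ∈ {x : ℝ | ∃ p : ℕ, ∃ q : ℤ, p ≤ n - 2 ∧
        x = |(2 * (p : ℝ) + 1) * ((μ:ℝ)/ν) - 2 * (q : ℝ)|} := by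
      refine ⟨p0, q0, by omega, ?_⟩
      have hkR : (2 * (p0:ℝ) + 1) * μ = 1 + 2 * ν * (q0:ℝ) := by exact_mod_cast hkey
      have : (2 * (p0:ℝ) + 1) * ((μ:ℝ)/ν) - 2 * (q0:ℝ) = 1 / ν := by
        field_simp
        linarith [hkR]
      rw [this, abs_of_pos (by positivity)]
    have hlb : ∀ x ∈ {x : ℝ | ∃ p : ℕ, ∃ q : ℤ, p ≤ n - 2 ∧
        x = |(2 * (p : ℝ) + 1) * ((μ:ℝ)/ν) - 2 * (q : ℝ)|}, 1 / (ν:ℝ) ≤ x := by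
      rintro x ⟨p, q, hp, rfl⟩
      set k : ℤ := (2 * (p:ℤ) + 1) * μ - 2 * q * ν with hk
      have hkodd : Odd k := by
        rcases hμ with ⟨m, hm⟩
        exact ⟨2*p*m + p + m - q*ν, by rw [hk, hm]; ring⟩
      have hk1 : 1 ≤ |k| := by
        rcases hkodd with ⟨m, hm⟩
        rcases abs_cases k with ⟨h1, h2⟩ | ⟨h1, h2⟩ <;> omega
      have heq : (2 * (p : ℝ) + 1) * ((μ:ℝ)/ν) - 2 * (q : ℝ) = (k:ℝ) / ν := by
        rw [hk]; push_cast; field_simp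
      rw [heq, abs_div, abs_of_pos hν0]
      have : (1:ℝ) ≤ |(k:ℝ)| := by
        rw [← Int.cast_abs]; exact_mod_cast hk1
      gcongr
    have hbdd : BddBelow {x : ℝ | ∃ p : ℕ, ∃ q : ℤ, p ≤ n - 2 ∧
        x = |(2 * (p : ℝ) + 1) * ((μ:ℝ)/ν) - 2 * (q : ℝ)|} := ⟨1/ν, hlb⟩
    exact le_antisymm (csInf_le hbdd hmem) (le_csInf ⟨_, hmem⟩ hlb)
  refine ⟨?_, ν + 1, hev⟩
  have : ∀ᶠ n in Filter.atTop, (1/(ν:ℝ)) = xiA ((μ : ℝ) / ν) n :=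
    Filter.eventually_atTop.2 ⟨ν+1, fun n hn => (hev n hn).symm⟩
  exact Filter.Tendsto.congr' this tendsto_const_nhds
end

section
/- For any A > 0 and ω > 0, the infimum of ∫_{ℝ²} ( A·ρ(x)² + (ω²/2)|x|²·ρ(x) ) dx over all nonnegative measurable ρ on ℝ² with ∫ρ = N equals (2√2/3)·√(A/π)·ω·N^{3/2}. -/
open MeasureTheory Real Set Metric

lemma oneD (c μ : ℝ) (hc : 0 < c) (hμ : 0 ≤ μ) (m : ℕ) (hm : m ≠ 0) :
    ∫ y in Ioi (0:ℝ), y * max (μ - c*y^2) 0 ^ m = μ^(m+1)/(2*c*(m+1)) := by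
  rcases eq_or_lt_of_le hμ with h0 | hμpos
  · subst h0
    have hz : ∀ y : ℝ, y * max (0 - c*y^2) 0 ^ m = 0 := by
      intro y
      have : 0 - c*y^2 ≤ 0 := by nlinarith [sq_nonneg y]
      rw [max_eq_right this, zero_pow hm, mul_zero]
    simp only [hz, integral_zero, zero_pow (Nat.succ_ne_zero m), zero_div]
  · set R := Real.sqrt (μ/c) with hR
    have hRpos : 0 < R := Real.sqrt_pos.mpr (div_pos hμpos hc)
    have hR2 : c * R^2 = μ := by
      rw [hR, Real.sq_sqrt (le_of_lt (div_pos hμpos hc))]; field_simp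
    set h := fun y : ℝ => y * max (μ - c*y^2) 0 ^ m with hh
    have hcont : Continuous h :=
      continuous_id.mul (((continuous_const.sub (continuous_const.mul (continuous_pow 2))).max
        continuous_const).pow m)
    have hzero : EqOn h 0 (Ioi R) := by
      intro y hy
      have hy' : R < y := hy
      have hsq : R^2 ≤ y^2 := by nlinarith [hRpos.le]
      have : μ - c*y^2 ≤ 0 := by nlinarith
      simp [hh, max_eq_right this, zero_pow hm]
    have hsplit : Ioc (0:ℝ) R ∪ Ioi R = Ioi 0 := Ioc_union_Ioi_eq_Ioi hRpos.le
    rw [← hsplit, setIntegral_union (Ioc_disjoint_Ioi le_rfl) measurableSet_Ioi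
      (hcont.integrableOn_Ioc)
      ((integrableOn_congr_fun hzero measurableSet_Ioi).mpr (integrableOn_zero))]
    rw [setIntegral_congr_fun measurableSet_Ioi hzero]
    simp only [Pi.zero_apply, integral_zero, add_zero]
    rw [← intervalIntegral.integral_of_le hRpos.le]
    have hEq : EqOn h (fun y => y * (μ - c*y^2)^m) (uIcc 0 R) := by
      intro y hy
      rw [uIcc_of_le hRpos.le] at hy
      have h1 : 0 ≤ y := hy.1
      have h2 : y ≤ R := hy.2
      have hsq : y^2 ≤ R^2 := by nlinarith
      have : 0 ≤ μ - c*y^2 := by nlinarith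
      simp [hh, max_eq_left this]
    rw [intervalIntegral.integral_congr hEq]
    have hderiv : ∀ y ∈ uIcc (0:ℝ) R,
        HasDerivAt (fun y : ℝ => -(μ - c*y^2)^(m+1)/(2*c*(m+1)))
          (y * (μ - c*y^2)^m) y := by
      intro y _
      have hbase : HasDerivAt (fun y : ℝ => μ - c*y^2) (-(c*(2*y^1))) y :=
        ((hasDerivAt_pow 2 y).const_mul c).const_sub μ
      have := ((hbase.pow (m+1)).neg).div_const (2*c*(m+1))
      refine this.congr_deriv ?_
      have hm1 : ((m:ℝ)+1) ≠ 0 := by positivity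
      rw [div_eq_iff (by positivity), Nat.add_sub_cancel]
      push_cast
      ring
    have hint : IntervalIntegrable (fun y => y * (μ - c*y^2)^m) volume 0 R :=
      (continuous_id.mul ((continuous_const.sub (continuous_const.mul (continuous_pow 2))).pow m)).intervalIntegrable 0 R
    rw [intervalIntegral.integral_eq_sub_of_hasDerivAt hderiv hint]
    have : μ - c*R^2 = 0 := by linarith [hR2]
    rw [this]
    rw [zero_pow (Nat.succ_ne_zero m)]
    push_cast
    field_simp
    simp

lemma radial2 (g : ℝ → ℝ) :
    ∫ x : EuclideanSpace ℝ (Fin 2), g ‖x‖ = 2 * π * ∫ y in Ioi (0:ℝ), y * g y := by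
  rw [MeasureTheory.integral_fun_norm_addHaar volume g]
  have h1 : Module.finrank ℝ (EuclideanSpace ℝ (Fin 2)) = 2 := finrank_euclideanSpace_fin
  rw [h1]
  have h2 : (volume (ball (0 : EuclideanSpace ℝ (Fin 2)) 1)).toReal = π := by
    rw [EuclideanSpace.volume_ball]
    have hg2 : Real.Gamma (1+1) = 1 := by norm_num [Real.Gamma_two]
    simp [hg2, Real.sq_sqrt Real.pi_nonneg, ENNReal.toReal_ofReal Real.pi_nonneg]
  rw [measureReal_def, h2]
  norm_num [mul_assoc]

lemma key_int (c μ : ℝ) (hc : 0 < c) (hμ : 0 ≤ μ) (m : ℕ) (hm : m ≠ 0) :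
    Integrable (fun x : EuclideanSpace ℝ (Fin 2) => max (μ - c*‖x‖^2) 0 ^ m) ∧
    ∫ x : EuclideanSpace ℝ (Fin 2), max (μ - c*‖x‖^2) 0 ^ m = π * μ^(m+1) / ((m+1) * c) := by
  constructor
  · apply Continuous.integrable_of_hasCompactSupport
    · exact ((continuous_const.sub (continuous_const.mul (continuous_norm.pow 2))).max
        continuous_const).pow m
    · apply HasCompactSupport.intro (isCompact_closedBall (0 : EuclideanSpace ℝ (Fin 2))
        (Real.sqrt (μ/c)))
      intro x hx
      rw [mem_closedBall_zero_iff] at hx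
      push_neg at hx
      have h1 : 0 ≤ Real.sqrt (μ/c) := Real.sqrt_nonneg _
      have h2 : Real.sqrt (μ/c)^2 = μ/c := Real.sq_sqrt (div_nonneg hμ hc.le)
      have h3 : μ/c < ‖x‖^2 := by nlinarith
      have : μ - c*‖x‖^2 ≤ 0 := by
        rw [div_lt_iff₀ hc] at h3; nlinarith
      rw [max_eq_right this, zero_pow hm]
  · have := radial2 (fun y => max (μ - c*y^2) 0 ^ m)
    rw [this, oneD c μ hc hμ m hm]
    have hm1 : ((m:ℝ)+1) ≠ 0 := by positivity
    push_cast
    field_simp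

set_option maxHeartbeats 1000000 in
/-- The infimum of the two-dimensional Thomas–Fermi functional with harmonic
confinement, `inf { ∫_{ℝ²} (A ρ² + (ω²/2)|x|² ρ) : ρ ≥ 0, ∫ρ = N }`, equals
`(2√2/3)·√(A/π)·ω·N^{3/2}`. -/
theorem stmt_12 (A ω N : ℝ) (hA : 0 < A) (hω : 0 < ω) (hN : 0 ≤ N) :
    IsGLB {E : ℝ | ∃ ρ : EuclideanSpace ℝ (Fin 2) → ℝ,
        Measurable ρ ∧ (∀ x, 0 ≤ ρ x) ∧ Integrable ρ ∧ (∫ x, ρ x = N) ∧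
        Integrable (fun x => A * ρ x ^ 2 + ω ^ 2 / 2 * ‖x‖ ^ 2 * ρ x) ∧
        E = ∫ x, (A * ρ x ^ 2 + ω ^ 2 / 2 * ‖x‖ ^ 2 * ρ x)}
      (2 * Real.sqrt 2 / 3 * Real.sqrt (A / π) * ω * N ^ ((3 : ℝ) / 2)) := by
  have hπ := Real.pi_pos
  set c := ω^2/2 with hc
  have hcpos : 0 < c := by positivity
  set μ0 := ω * Real.sqrt (2*A*N/π) with hμ0
  have hμ0nn : 0 ≤ μ0 := by positivity
  have hμ0sq : μ0^2 = ω^2 * (2*A*N/π) := by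
    rw [hμ0, mul_pow, Real.sq_sqrt (by positivity)]
  have hkey : π * μ0^2 = 2*A*N*ω^2 := by
    rw [hμ0sq]; field_simp
  set ρs := fun x : EuclideanSpace ℝ (Fin 2) => max (μ0 - c*‖x‖^2) 0 / (2*A) with hρs
  obtain ⟨hI1, hE1⟩ := key_int c μ0 hcpos hμ0nn 1 one_ne_zero
  obtain ⟨hI2, hE2⟩ := key_int c μ0 hcpos hμ0nn 2 two_ne_zero
  simp only [pow_one] at hI1 hE1
  norm_num at hE1 hE2
  -- hE1 : ∫ max = π * μ0^2 / (2*c);  hE2 : ∫ max^2 = π * μ0^3 / (3*c)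
  have hρsnn : ∀ x, 0 ≤ ρs x := fun x => div_nonneg (le_max_right _ _) (by positivity)
  have hρsint : Integrable ρs := by
    simpa only [hρs, div_eq_mul_inv] using hI1.mul_const (2*A)⁻¹
  have hρs_sum : ∫ x, ρs x = N := by
    rw [hρs]
    simp only [div_eq_mul_inv]
    rw [integral_mul_const, hE1]
    rw [hc] at *
    field_simp
    nlinarith [hkey]
  have hρssq_int : Integrable (fun x => ρs x^2) := by
    simp only [hρs, div_pow]
    exact hI2.div_const _
  have hρssq_val : ∫ x, ρs x^2 = π * μ0^3 / (3*c) / (2*A)^2 := by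
    simp only [hρs, div_pow]
    rw [integral_div, hE2]
  -- pointwise identity for the minimizer
  have hpoint : ∀ x : EuclideanSpace ℝ (Fin 2),
      A * ρs x^2 + c*‖x‖^2 * ρs x = μ0 * ρs x - A * ρs x^2 := by
    intro x
    rcases le_or_gt (μ0 - c*‖x‖^2) 0 with h | h
    · simp [hρs, max_eq_right h]
    · simp only [hρs, max_eq_left h.le]
      field_simp
      ring
  -- the common value
  have hcore : μ0 * N - A * (π * μ0^3 / (3*c) / (2*A)^2) = 2/3*μ0*N := by
    have h3 : π*μ0^3 = 2*A*N*ω^2*μ0 := by nlinarith [hkey]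
    rw [hc] at *
    field_simp
    nlinarith [h3]
  have henergy_int : Integrable (fun x => A * ρs x^2 + c*‖x‖^2 * ρs x) := by
    apply Integrable.congr ((hρsint.const_mul μ0).sub (hρssq_int.const_mul A))
    exact Filter.Eventually.of_forall fun x => (hpoint x).symm
  have henergy_val : ∫ x, (A * ρs x^2 + c*‖x‖^2 * ρs x) = 2/3*μ0*N := by
    rw [integral_congr_ae (Filter.Eventually.of_forall hpoint),
      integral_sub (hρsint.const_mul μ0) (hρssq_int.const_mul A),
      integral_const_mul, integral_const_mul, hρs_sum, hρssq_val]
    exact hcore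
  -- the stated value equals 2/3 μ0 N
  have hval : 2 * Real.sqrt 2 / 3 * Real.sqrt (A / π) * ω * N ^ ((3 : ℝ) / 2)
      = 2/3*μ0*N := by
    have hsN : Real.sqrt (2*A*N/π) = Real.sqrt 2 * (Real.sqrt (A/π) * Real.sqrt N) := by
      rw [show 2*A*N/π = 2*((A/π)*N) by field_simp,
        Real.sqrt_mul (by norm_num), Real.sqrt_mul (div_nonneg hA.le hπ.le)]
    have hN32 : N ^ ((3:ℝ)/2) = N * Real.sqrt N := by
      rw [show (3:ℝ)/2 = (3:ℝ)*(1/2) by norm_num, Real.rpow_mul hN,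
        show ((3:ℝ)) = ((3:ℕ):ℝ) by norm_num, Real.rpow_natCast, ← Real.sqrt_eq_rpow,
        show N^3 = N^2*N by ring, Real.sqrt_mul (sq_nonneg N), Real.sqrt_sq hN]
    rw [hN32, hμ0, hsN]
    ring
  constructor
  · -- lower bound
    rintro E ⟨ρ, hm, hpos, hint, hsum, hEint, rfl⟩
    rw [hval]
    have hge : ∀ x, μ0 * ρ x - A * ρs x^2 ≤ A * ρ x^2 + c*‖x‖^2 * ρ x := by
      intro x
      have hr := hpos x
      have hv0 : (0:ℝ) ≤ c*‖x‖^2 := by positivity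
      have hs2 : 2*A*ρs x = max (μ0 - c*‖x‖^2) 0 := by
        rw [hρs]; field_simp
      have h1 : μ0 - c*‖x‖^2 ≤ 2*A*ρs x := hs2 ▸ le_max_left _ _
      have h2 : 0 ≤ ρs x := hρsnn x
      have h3 : 0 ≤ 2*A*ρs x + c*‖x‖^2 - μ0 := by linarith
      nlinarith [mul_nonneg hA.le (sq_nonneg (ρ x - ρs x)), mul_nonneg hr h3]
    have hlhs_int : Integrable (fun x => μ0 * ρ x - A * ρs x^2) :=
      (hint.const_mul μ0).sub (hρssq_int.const_mul A)
    have := integral_mono hlhs_int hEint hge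
    rw [integral_sub (hint.const_mul μ0) (hρssq_int.const_mul A),
      integral_const_mul, integral_const_mul, hsum, hρssq_val] at this
    calc 2/3*μ0*N = μ0 * N - A * (π * μ0^3 / (3*c) / (2*A)^2) := hcore.symm
      _ ≤ _ := this
  · -- it is the greatest lower bound: the value is attained
    intro b hb
    apply hb
    refine ⟨ρs, ?_, hρsnn, hρsint, hρs_sum, henergy_int, by rw [henergy_val, hval]⟩
    exact (((continuous_const.sub (continuous_const.mul (continuous_norm.pow 2))).max
      continuous_const).div_const (2*A)).measurable
end

section
/- Suppose for every finite interval Q and all n ≥ 0 a local exclusion bound holds: the kinetic energy restricted to configurations with the particles indexed by a set A all inside Q is at least (|A|−1)·(ξ²/|Q|²)·∫ |ψ|² over that region. Then the expected local kinetic energy satisfies T^Q ≥ (ξ²/|Q|²)·( ∫_Q ρ(x) dx − 1 )₊, where ρ is the one-particle density of the normalized N-particle state ψ. -/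
/-!
The regions of configuration space in which exactly the particles labelled by `A` lie in `Q`
partition it, so their `|ψ|²`-masses `m_A` sum to `1`, while `∑_A |A| m_A = ∫_Q ρ` because a
configuration in the region of `A` has `|A|` particles in `Q`. Hence
`c (∫_Q ρ - 1) = ∑_A (|A| - 1) c m_A ≤ ∑_A T_A`; when `∫_Q ρ ≤ 1` the positive part vanishes
and the bound is `T_A ≥ 0`.
-/

open MeasureTheory Finset Set

section Occupation

variable {ι α R : Type*}

def occupationRegion [DecidableEq ι] (Q : Set α) (A : Finset ι) : Set (ι → α) :=
  Set.univ.pi fun l => if l ∈ A then Q else Qᶜ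

open scoped Classical in
lemma mem_occupationRegion_iff [Fintype ι] [DecidableEq ι] {Q : Set α}
    {A : Finset ι} {x : ι → α} :
    x ∈ occupationRegion Q A ↔ ({l | x l ∈ Q} : Finset ι) = A := by
  simp only [occupationRegion, Set.mem_pi, Set.mem_univ, true_implies, Finset.ext_iff,
    Finset.mem_filter, Finset.mem_univ, true_and]
  refine forall_congr' fun l => ?_
  split_ifs with hl <;> simp [hl]

lemma MeasurableSet.occupationRegion [DecidableEq ι] [Countable ι] [MeasurableSpace α]
    {Q : Set α} (hQ : MeasurableSet Q) (A : Finset ι) : MeasurableSet (occupationRegion Q A) :=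
  MeasurableSet.univ_pi fun l => by split_ifs; exacts [hQ, hQ.compl]

lemma prod_ite_indicator_eq_indicator_occupationRegion [Fintype ι] [DecidableEq ι]
    [CommMonoidWithZero R] (Q : Set α) (A : Finset ι) (x : ι → α) :
    ∏ l, (if l ∈ A then Q.indicator (fun _ => (1 : R)) (x l)
      else Qᶜ.indicator (fun _ => (1 : R)) (x l)) = (occupationRegion Q A).indicator 1 x := by
  rw [occupationRegion, ← Finset.coe_univ, Set.indicator_pi_one_apply]
  exact Finset.prod_congr rfl fun l _ => by split_ifs <;> rfl

open scoped Classical in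
lemma sum_mul_indicator_occupationRegion [Fintype ι] [DecidableEq ι] [NonAssocSemiring R]
    (Q : Set α) (w : Finset ι → R) (x : ι → α) :
    ∑ A, w A * (occupationRegion Q A).indicator 1 x = w {l | x l ∈ Q} := by
  rw [Finset.sum_eq_single_of_mem _ (Finset.mem_univ ({l | x l ∈ Q} : Finset ι))]
  · rw [Set.indicator_of_mem (mem_occupationRegion_iff.2 rfl), Pi.one_apply, mul_one]
  · intro A _ hA
    rw [Set.indicator_of_notMem (fun h => hA (mem_occupationRegion_iff.1 h).symm), mul_zero]

open scoped Classical in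
lemma card_filter_mem_eq_sum_indicator [Fintype ι] [AddCommMonoidWithOne R] (Q : Set α)
    (x : ι → α) :
    (#{l | x l ∈ Q} : R) = ∑ j, Q.indicator (fun _ => (1 : R)) (x j) := by
  simp only [Set.indicator_apply, Finset.sum_boole]

end Occupation

lemma MeasureTheory.Integrable.mul_indicator_one {β 𝕜 : Type*} [MeasurableSpace β]
    {μ : Measure β} [NormedRing 𝕜] {f : β → 𝕜} (hf : Integrable f μ) {s : Set β} (hs : MeasurableSet s) :
    Integrable (fun x => f x * s.indicator 1 x) μ := by
  refine (hf.indicator hs).congr (ae_of_all _ fun x => ?_)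
  by_cases hx : x ∈ s <;> simp [hx]

section Integral

variable {ι α : Type*} [Fintype ι] [DecidableEq ι] [MeasurableSpace α] {μ : Measure (ι → α)}
  {f : (ι → α) → ℝ} {Q : Set α}

open scoped Classical in
lemma sum_mul_integral_mul_indicator_occupationRegion (hf : Integrable f μ) (hQ : MeasurableSet Q)
    (w : Finset ι → ℝ) :
    ∑ A, w A * ∫ x, f x * (occupationRegion Q A).indicator 1 x ∂μ
      = ∫ x, f x * w {l | x l ∈ Q} ∂μ := by
  simp_rw [← integral_const_mul]
  rw [← integral_finsetSum _ fun A _ =>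
    (hf.mul_indicator_one (hQ.occupationRegion A)).const_mul (w A)]
  congr with x
  rw [← sum_mul_indicator_occupationRegion Q w x, Finset.mul_sum]
  exact Finset.sum_congr rfl fun A _ => mul_left_comm _ _ _

lemma sum_card_mul_integral_mul_indicator_occupationRegion (hf : Integrable f μ)
    (hQ : MeasurableSet Q) :
    ∑ A : Finset ι, #A * ∫ x, f x * (occupationRegion Q A).indicator 1 x ∂μ
      = ∑ j, ∫ x, f x * Q.indicator (fun _ => 1) (x j) ∂μ := by
  rw [sum_mul_integral_mul_indicator_occupationRegion hf hQ (fun A => (#A : ℝ)),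
    ← integral_finsetSum]
  · simp_rw [card_filter_mem_eq_sum_indicator, Finset.mul_sum]
  · exact fun j _ => hf.mul_indicator_one (hQ.preimage (measurable_pi_apply j))

lemma sum_integral_mul_indicator_occupationRegion (hf : Integrable f μ) (hQ : MeasurableSet Q) :
    ∑ A : Finset ι, ∫ x, f x * (occupationRegion Q A).indicator 1 x ∂μ = ∫ x, f x ∂μ := by
  simpa using sum_mul_integral_mul_indicator_occupationRegion hf hQ (fun _ => (1 : ℝ))

end Integral

lemma mul_max_sum_mul_sub_one_le_sum {κ : Type*} {s : Finset κ} {m n T : κ → ℝ} {c : ℝ}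
    (hm : ∑ i ∈ s, m i = 1) (hT0 : ∀ i ∈ s, 0 ≤ T i) (hT : ∀ i ∈ s, (n i - 1) * c * m i ≤ T i) :
    c * max (∑ i ∈ s, n i * m i - 1) 0 ≤ ∑ i ∈ s, T i := by
  rcases le_total (∑ i ∈ s, n i * m i - 1) 0 with h | h
  · rw [max_eq_right h, mul_zero]
    exact Finset.sum_nonneg hT0
  · rw [max_eq_left h]
    calc c * (∑ i ∈ s, n i * m i - 1)
        = c * (∑ i ∈ s, n i * m i - ∑ i ∈ s, m i) := by rw [hm]
      _ = ∑ i ∈ s, (n i - 1) * c * m i := by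
          rw [← Finset.sum_sub_distrib, Finset.mul_sum]
          exact Finset.sum_congr rfl fun _ _ => by ring
      _ ≤ ∑ i ∈ s, T i := Finset.sum_le_sum hT

theorem stmt_15_general (N : ℕ) (a b ξ : ℝ)
    (ψ : (Fin N → ℝ) → ℂ)
    (hψint : Integrable fun x => ‖ψ x‖ ^ 2)
    (hψnorm : ∫ x, ‖ψ x‖ ^ 2 = 1)
    (T : Finset (Fin N) → ℝ) (hT0 : ∀ A, 0 ≤ T A)
    (hT : ∀ A : Finset (Fin N),
      ((A.card : ℝ) - 1) * ξ ^ 2 / (b - a) ^ 2 * ∫ x, ‖ψ x‖ ^ 2 *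
          ∏ l : Fin N, (if l ∈ A then (Set.Icc a b).indicator (fun _ => (1 : ℝ)) (x l)
            else (Set.Icc a b)ᶜ.indicator (fun _ => (1 : ℝ)) (x l)) ≤ T A)
    (ρ : ℝ → ℝ)
    (hρ : ∫ t in Set.Icc a b, ρ t =
      ∑ j : Fin N, ∫ x, ‖ψ x‖ ^ 2 * (Set.Icc a b).indicator (fun _ => (1 : ℝ)) (x j)) :
    ξ ^ 2 / (b - a) ^ 2 * max ((∫ t in Set.Icc a b, ρ t) - 1) 0 ≤
      ∑ A : Finset (Fin N), T A := by
  simp_rw [prod_ite_indicator_eq_indicator_occupationRegion, mul_div_assoc] at hT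
  rw [hρ, ← sum_card_mul_integral_mul_indicator_occupationRegion hψint measurableSet_Icc]
  refine mul_max_sum_mul_sub_one_le_sum ?_ (fun A _ => hT0 A) (fun A _ => hT A)
  rw [sum_integral_mul_indicator_occupationRegion hψint measurableSet_Icc, hψnorm]

/-- Local exclusion implies the density bound: if the local kinetic energy `T A`
of the configurations with exactly the particles labelled by `A` inside the
interval `Q = [a,b]` satisfies `T A ≥ (|A|−1)·(ξ²/|Q|²)·∫_{region(A)} |ψ|²`,
then the total local kinetic energy `∑_A T A = T^Q` satisfies
`T^Q ≥ (ξ²/|Q|²)·(∫_Q ρ − 1)₊` for the one-particle density `ρ` of the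
normalized state `ψ`. -/
theorem stmt_15 (N : ℕ) (hN : 1 ≤ N) (a b ξ : ℝ) (hab : a < b) (hξ : 0 ≤ ξ)
    (ψ : (Fin N → ℝ) → ℂ)
    (hψint : Integrable fun x => ‖ψ x‖ ^ 2)
    (hψnorm : ∫ x, ‖ψ x‖ ^ 2 = 1)
    (T : Finset (Fin N) → ℝ) (hT0 : ∀ A, 0 ≤ T A)
    (hT : ∀ A : Finset (Fin N),
      ((A.card : ℝ) - 1) * ξ ^ 2 / (b - a) ^ 2 * ∫ x, ‖ψ x‖ ^ 2 *
          ∏ l : Fin N, (if l ∈ A then (Set.Icc a b).indicator (fun _ => (1 : ℝ)) (x l)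
            else (Set.Icc a b)ᶜ.indicator (fun _ => (1 : ℝ)) (x l)) ≤ T A)
    (ρ : ℝ → ℝ)
    (hρ : ∫ t in Set.Icc a b, ρ t =
      ∑ j : Fin N, ∫ x, ‖ψ x‖ ^ 2 * (Set.Icc a b).indicator (fun _ => (1 : ℝ)) (x j)) :
    ξ ^ 2 / (b - a) ^ 2 * max ((∫ t in Set.Icc a b, ρ t) - 1) 0 ≤
      ∑ A : Finset (Fin N), T A :=
  stmt_15_general N a b ξ ψ hψint hψnorm T hT0 hT ρ hρ
end
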